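/- arXiv:2209.06121 — 5 statements merged into one kernel-verified Lean document; each statement's English description precedes it below -/
import Mathlib

section
/- The groupoid of isomorphisms of the category Cospan of finite sets is equivalent to the groupoid of finite sets and bijections, via the identity on objects and sending a bijection σ : S → T to the class [(σ, id_T)]. -/
universe u

/-- One-step pushout relation on `A ⊕ B` for two maps out of a common domain `T`. -/
def PushRel {A B T : Type u} (f : T → A) (g : T → B) : A ⊕ B → A ⊕ B → Prop :=
  fun x y => ∃ t, x = Sum.inl (f t) ∧ y = Sum.inr (g t)

/-- The pushout of `A ←f− T −g→ B`, as a quotient of the disjoint union. -/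
def Push {A B T : Type u} (f : T → A) (g : T → B) : Type u := Quot (PushRel f g)

/-- The left structure map into the pushout. -/
def Push.inl {A B T : Type u} (f : T → A) (g : T → B) (a : A) : Push f g :=
  Quot.mk _ (Sum.inl a)

/-- The right structure map into the pushout. -/
def Push.inr {A B T : Type u} (f : T → A) (g : T → B) (b : B) : Push f g :=
  Quot.mk _ (Sum.inr b)

/-- Isomorphism of cospans `S → V ← T` and `S → V' ← T` with the same feet:
a bijection of the middle objects commuting with both legs. -/
def CospanIso {S T V V' : Type u} (l : S → V) (r : T → V) (l' : S → V') (r' : T → V') : Prop :=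
  ∃ σ : V ≃ V', (∀ s, σ (l s) = l' s) ∧ ∀ t, σ (r t) = r' t

/-- The morphism class `[(l, r)]` of a cospan `S → V ← T` is an isomorphism in the
category of isomorphism classes of cospans of finite sets: there is an inverse
cospan whose two pushout composites are isomorphic to the identity cospans. -/
def IsIsoCospan {S T V : Type u} (l : S → V) (r : T → V) : Prop :=
  ∃ (W : Type u) (_ : Finite W) (l' : T → W) (r' : S → W),
    CospanIso (fun s => Push.inl r l' (l s)) (fun s => Push.inr r l' (r' s))
      (id : S → S) (id : S → S) ∧
    CospanIso (fun t => Push.inl r' l (l' t)) (fun t => Push.inr r' l (r t))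
      (id : T → T) (id : T → T)

section Aux

variable {A B T : Type u}

/-- Explicit description of the equivalence generated by `PushRel` when both legs
are injective. -/
def PushE (f : T → A) (g : T → B) : A ⊕ B → A ⊕ B → Prop
  | Sum.inl a, Sum.inl a' => a = a'
  | Sum.inl a, Sum.inr b => ∃ t, f t = a ∧ g t = b
  | Sum.inr b, Sum.inl a => ∃ t, f t = a ∧ g t = b
  | Sum.inr b, Sum.inr b' => b = b'

theorem pushE_of_eqvGen {f : T → A} {g : T → B} (hf : Function.Injective f)
    (hg : Function.Injective g) {x y : A ⊕ B}
    (h : Relation.EqvGen (PushRel f g) x y) : PushE f g x y := by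
  induction h with
  | rel x y h =>
      obtain ⟨t, rfl, rfl⟩ := h
      exact ⟨t, rfl, rfl⟩
  | refl x => cases x <;> simp [PushE]
  | symm x y _ ih =>
      cases x <;> cases y <;> simp only [PushE] at * <;>
        first | exact ih.symm | exact ih
  | trans x y z _ _ ih₁ ih₂ =>
      cases x <;> cases y <;> cases z <;> simp only [PushE] at * <;>
        first
        | exact ih₁.trans ih₂
        | (subst ih₁; exact ih₂)
        | (subst ih₂; exact ih₁)
        | (obtain ⟨t, ht1, ht2⟩ := ih₁; obtain ⟨t', ht1', ht2'⟩ := ih₂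
           first
           | (obtain rfl := hg (ht2.trans ht2'.symm); exact ht1.symm.trans ht1')
           | (obtain rfl := hf (ht1.trans ht1'.symm); exact ht2.symm.trans ht2')
           )

theorem Push.inl_injective {f : T → A} {g : T → B} (hf : Function.Injective f)
    (hg : Function.Injective g) : Function.Injective (Push.inl f g) := by
  intro a a' h
  have := pushE_of_eqvGen hf hg (Quot.eq.mp h)
  exact this

theorem Push.inr_injective {f : T → A} {g : T → B} (hf : Function.Injective f)
    (hg : Function.Injective g) : Function.Injective (Push.inr f g) := by
  intro b b' h
  have := pushE_of_eqvGen hf hg (Quot.eq.mp h)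
  exact this

end Aux


/-- The groupoid of isomorphisms of the category `Cospan` of finite sets is equivalent
to the groupoid of finite sets and bijections, via the identity on objects and sending
a bijection `σ : S ≃ T` to the class `[(σ, id_T)]`: this assignment is functorial up to
isomorphism of cospans, preserves identities, is essentially surjective onto the
invertible cospan classes, and is faithful. -/
theorem cospan_iso_groupoid_equiv :
    -- functoriality: the composite of `[(e, id)]` and `[(f, id)]` is `[(f ∘ e, id)]`
    (∀ {S T U : Type u} [Finite S] [Finite T] [Finite U] (e : S ≃ T) (f : T ≃ U),
      CospanIso (fun s => Push.inl (id : T → T) (fun t => f t) (e s))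
        (fun u => Push.inr (id : T → T) (fun t => f t) u)
        (fun s => f (e s)) (fun u : U => u)) ∧
    -- identities are sent to identity cospans
    (∀ (S : Type u) [Finite S],
      CospanIso (fun s : S => (Equiv.refl S) s) (fun s : S => s)
        (fun s : S => s) (fun s : S => s)) ∧
    -- every invertible cospan class comes from a bijection
    (∀ {S T V : Type u} [Finite S] [Finite T] [Finite V] (σ : S → V) (τ : T → V),
      IsIsoCospan σ τ → ∃ e : S ≃ T, CospanIso σ τ (fun s => e s) (fun t => t)) ∧
    -- faithfulness: distinct bijections give distinct cospan classes
    (∀ {S T : Type u} [Finite S] [Finite T] (e e' : S ≃ T),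
      CospanIso (fun s => e s) (fun t : T => t) (fun s => e' s) (fun t : T => t) → e = e') := by
  refine ⟨?_, ?_, ?_, ?_⟩
  · intro S T U _ _ _ e f
    refine ⟨⟨Quot.lift (Sum.elim (fun t => f t) _root_.id) ?_, Push.inr _ _, ?_, fun u => rfl⟩,
      fun s => rfl, fun u => rfl⟩
    · rintro x y ⟨t, rfl, rfl⟩; rfl
    · intro x
      induction x using Quot.ind with
      | mk y =>
        cases y with
        | inl t => exact (Quot.sound ⟨t, rfl, rfl⟩).symm
        | inr u => rfl
  · intro S _
    exact ⟨Equiv.refl S, fun s => rfl, fun s => rfl⟩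
  · intro S T V _ _ _ σ τ hiso
    obtain ⟨W, _, l', r', ⟨ψ, hψl, hψr⟩, ⟨ψ', hψ'l, hψ'r⟩⟩ := hiso
    simp only [id_eq] at hψl hψr hψ'l hψ'r
    have hσinj : Function.Injective σ := fun s s' h => by
      have := hψl s; rw [h, hψl s'] at this; exact this.symm
    have hτinj : Function.Injective τ := fun t t' h => by
      have := hψ'r t; rw [h, hψ'r t'] at this; exact this.symm
    have hl'inj : Function.Injective l' := fun t t' h => by
      have := hψ'l t; rw [h, hψ'l t'] at this; exact this.symm
    have hr'inj : Function.Injective r' := fun s s' h => by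
      have := hψr s; rw [h, hψr s'] at this; exact this.symm
    have hσsurj : Function.Surjective σ := by
      intro v
      refine ⟨ψ (Push.inl τ l' v), ?_⟩
      have h1 : ψ (Push.inl τ l' (σ (ψ (Push.inl τ l' v)))) = ψ (Push.inl τ l' v) := hψl _
      exact Push.inl_injective hτinj hl'inj (ψ.injective h1)
    have hτsurj : Function.Surjective τ := by
      intro v
      refine ⟨ψ' (Push.inr r' σ v), ?_⟩
      have h1 : ψ' (Push.inr r' σ (τ (ψ' (Push.inr r' σ v)))) = ψ' (Push.inr r' σ v) := hψ'r _
      exact Push.inr_injective hr'inj hσinj (ψ'.injective h1)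
    let σe : S ≃ V := Equiv.ofBijective σ ⟨hσinj, hσsurj⟩
    let τe : T ≃ V := Equiv.ofBijective τ ⟨hτinj, hτsurj⟩
    refine ⟨σe.trans τe.symm, τe.symm, fun s => rfl, fun t => ?_⟩
    exact τe.symm_apply_apply t
  · intro S T _ _ e e' ⟨φ, hφl, hφr⟩
    ext s
    have := hφl s
    rw [hφr (e s)] at this
    exact this
end

section
/- The category Cospan of finite sets is hereditary: given composable cospans φ₀ = [(f₁,g₁)] : S → T and φ₁ = [(f₂,g₂)] : T → U with composite φ = φ₁∘φ₀ given by pushout object P, the decomposition of φ into connected cospans indexed by P is compatible with decompositions of φ₀ and φ₁; explicitly, letting f',g' be the pushout maps into P, for each u ∈ P the restriction φ_u of φ to the fibers over u satisfies φ_u = (⨿_{w∈g'⁻¹(u)} (φ₁)_w) ∘ (⨿_{v∈f'⁻¹(u)} (φ₀)_v), where (φ₀)_v and (φ₁)_w are the connected components of φ₀ and φ₁. -/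
universe u

/-- The two structure maps of a pushout agree on the common domain. -/
theorem Push.inl_comp_eq_inr {A B T : Type u} (f : T → A) (g : T → B) (t : T) :
    Push.inl f g (f t) = Push.inr f g (g t) :=
  Quot.sound ⟨t, rfl, rfl⟩

/-- The left foot of the disjoint union `⨿_{v ∈ f'⁻¹(u)} (φ₀)_v` of connected
components of `φ₀ = (l₀, r₀)` lying over `u`. -/
def fibAr {T V W : Type u} (r₀ : T → V) (l₁ : T → W) (u : Push r₀ l₁)
    (t : {t : T // Push.inl r₀ l₁ (r₀ t) = u}) : {v : V // Push.inl r₀ l₁ v = u} :=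
  ⟨r₀ t.1, t.2⟩

/-- The right foot of the disjoint union `⨿_{w ∈ g'⁻¹(u)} (φ₁)_w` of connected
components of `φ₁ = (l₁, r₁)` lying over `u`. -/
def fibBl {T V W : Type u} (r₀ : T → V) (l₁ : T → W) (u : Push r₀ l₁)
    (t : {t : T // Push.inl r₀ l₁ (r₀ t) = u}) : {w : W // Push.inr r₀ l₁ w = u} :=
  ⟨l₁ t.1, by rw [← Push.inl_comp_eq_inr r₀ l₁ t.1]; exact t.2⟩

section Aux

variable {T V W : Type u} (r₀ : T → V) (l₁ : T → W) (u : Push r₀ l₁)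

/-- Classifying map used to show the fiber pushout is a subsingleton. -/
noncomputable def classify : Push r₀ l₁ →
    (Push (fibAr r₀ l₁ u) (fibBl r₀ l₁ u)) ⊕ PUnit.{u+1} := by
  classical
  refine Quot.lift (fun x => ?_) ?_
  · exact Sum.rec
      (fun v => if h : Push.inl r₀ l₁ v = u then
          Sum.inl (Push.inl (fibAr r₀ l₁ u) (fibBl r₀ l₁ u) ⟨v, h⟩)
        else Sum.inr PUnit.unit)
      (fun w => if h : Push.inr r₀ l₁ w = u then
          Sum.inl (Push.inr (fibAr r₀ l₁ u) (fibBl r₀ l₁ u) ⟨w, h⟩)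
        else Sum.inr PUnit.unit) x
  · rintro x y ⟨t, rfl, rfl⟩
    by_cases h : Push.inl r₀ l₁ (r₀ t) = u
    · have h' : Push.inr r₀ l₁ (l₁ t) = u := by
        rw [← Push.inl_comp_eq_inr r₀ l₁ t]; exact h
      simp only [dif_pos h, dif_pos h']
      exact congrArg Sum.inl (Quot.sound ⟨⟨t, h⟩, rfl, rfl⟩)
    · have h' : ¬ Push.inr r₀ l₁ (l₁ t) = u := by
        rw [← Push.inl_comp_eq_inr r₀ l₁ t]; exact h
      simp only [dif_neg h, dif_neg h']

theorem classify_inl (v : V) (h : Push.inl r₀ l₁ v = u) :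
    classify r₀ l₁ u u =
      Sum.inl (Push.inl (fibAr r₀ l₁ u) (fibBl r₀ l₁ u) ⟨v, h⟩) := by
  rw [show classify r₀ l₁ u u = classify r₀ l₁ u (Push.inl r₀ l₁ v) from
    congrArg _ h.symm]
  exact dif_pos h

theorem classify_inr (w : W) (h : Push.inr r₀ l₁ w = u) :
    classify r₀ l₁ u u =
      Sum.inl (Push.inr (fibAr r₀ l₁ u) (fibBl r₀ l₁ u) ⟨w, h⟩) := by
  rw [show classify r₀ l₁ u u = classify r₀ l₁ u (Push.inr r₀ l₁ w) from
    congrArg _ h.symm]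
  exact dif_pos h

theorem fibPush_subsingleton :
    ∀ x y : Push (fibAr r₀ l₁ u) (fibBl r₀ l₁ u), x = y := by
  have key : ∀ x : Push (fibAr r₀ l₁ u) (fibBl r₀ l₁ u),
      Sum.inl x = classify r₀ l₁ u u := by
    intro x
    induction x using Quot.ind with
    | _ z =>
      cases z with
      | inl v => exact (classify_inl r₀ l₁ u v.1 v.2).symm
      | inr w => exact (classify_inr r₀ l₁ u w.1 w.2).symm
  intro x y
  have := (key x).trans (key y).symm
  exact Sum.inl.injEq _ _ ▸ this

theorem fibPush_nonempty : Nonempty (Push (fibAr r₀ l₁ u) (fibBl r₀ l₁ u)) := by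
  induction u using Quot.ind with
  | _ z =>
    cases z with
    | inl v => exact ⟨Push.inl _ _ ⟨v, rfl⟩⟩
    | inr w => exact ⟨Push.inr _ _ ⟨w, rfl⟩⟩

end Aux

/-- The category of cospans of finite sets is hereditary: for composable cospans
`φ₀ = (l₀, r₀) : S → V ← T` and `φ₁ = (l₁, r₁) : T → W ← U` with composite given by
the pushout `P = V ⊔_T W`, for every `u ∈ P` the connected component `φ_u` of the
composite over `u` (the restriction of the composite to the fibers over `u`, with
middle a one-point set) is isomorphic as a cospan to the pushout composite
`(⨿_{w ∈ g'⁻¹(u)} (φ₁)_w) ∘ (⨿_{v ∈ f'⁻¹(u)} (φ₀)_v)` of the disjoint unions of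
connected components of `φ₀` and `φ₁` lying over `u`. -/
theorem cospan_hereditary
    {S T U V W : Type u} [Finite S] [Finite T] [Finite U] [Finite V] [Finite W]
    (l₀ : S → V) (r₀ : T → V) (l₁ : T → W) (r₁ : U → W) (u : Push r₀ l₁) :
    CospanIso
      (fun s : {s : S // Push.inl r₀ l₁ (l₀ s) = u} =>
        Push.inl (fibAr r₀ l₁ u) (fibBl r₀ l₁ u) ⟨l₀ s.1, s.2⟩)
      (fun y : {y : U // Push.inr r₀ l₁ (r₁ y) = u} =>
        Push.inr (fibAr r₀ l₁ u) (fibBl r₀ l₁ u) ⟨r₁ y.1, y.2⟩)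
      (fun _ => PUnit.unit.{u + 1})
      (fun _ => PUnit.unit.{u + 1}) := by
  obtain ⟨c⟩ := fibPush_nonempty r₀ l₁ u
  refine ⟨⟨fun _ => PUnit.unit, fun _ => c,
    fun x => fibPush_subsingleton r₀ l₁ u c x, fun _ => rfl⟩, fun _ => rfl, fun _ => rfl⟩
end

section
/- Let S be a finite set. Ties on S (pairs (S₀, P) of a subset S₀ ⊆ S of untied elements and a partition P of S∖S₀ into nonempty blocks) with the composition (T₀,Q)∘(S₀,P) := (S₀∩T₀, the set of nonempty intersections A∩B with A ∈ P∪{S₀}, B ∈ Q∪{T₀}, (A,B) ≠ (S₀,T₀)) form a monoid with identity (S, ∅). -/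
/-- The data of a tie on a finite set `S`: a set `S₀` of untied elements together with
a collection of blocks (intended to be a partition of `S ∖ S₀` into nonempty subsets). -/
def TieData (S : Type*) := Finset S × Finset (Finset S)

/-- `(S₀, P)` is a tie on `S`: the blocks of `P` are nonempty, disjoint from `S₀`, and
every element outside `S₀` lies in exactly one block. -/
def IsTie {S : Type*} [DecidableEq S] [Fintype S] (p : TieData S) : Prop :=
  (∀ B ∈ p.2, B.Nonempty) ∧
  (∀ B ∈ p.2, ∀ x ∈ B, x ∉ p.1) ∧
  (∀ x : S, x ∉ p.1 → ∃! B, B ∈ p.2 ∧ x ∈ B)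

/-- The composition `(T₀, Q) ∘ (S₀, P)` of ties: the untied part is `S₀ ∩ T₀` and the
blocks are the nonempty intersections `A ∩ B` with `A ∈ P ∪ {S₀}`, `B ∈ Q ∪ {T₀}` and
`(A, B) ≠ (S₀, T₀)`. -/
def tieComp {S : Type*} [DecidableEq S] (q p : TieData S) : TieData S :=
  (p.1 ∩ q.1,
    ((((p.2 ∪ {p.1}) ×ˢ (q.2 ∪ {q.1})).filter (fun AB => AB ≠ (p.1, q.1))).image
        (fun AB => AB.1 ∩ AB.2)).filter (fun B => B.Nonempty))

/-!
A tie `p = (S₀, P)` is determined by `S₀` together with its cell map `x ↦ p.cell x`, sending `x`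
to the unique member of `P ∪ {S₀}` containing it. The blocks of `q ∘ p` are exactly the sets
`p.cell x ∩ q.cell x` for `x ∉ S₀ ∩ T₀`, so the cell map of `q ∘ p` is the pointwise intersection
of the cell maps of `p` and `q`. Associativity and the unit laws then reduce to those of `∩`,
the cell map of `(S, ∅)` being constantly `S`.
-/

namespace TieData

variable {S : Type*} [DecidableEq S]

def cell (p : TieData S) (x : S) : Finset S :=
  ((p.2 ∪ {p.1}).filter (x ∈ ·)).biUnion id

end TieData

namespace IsTie

open TieData

variable {S : Type*} [DecidableEq S] [Fintype S] {p q : TieData S} {x y : S} {A B : Finset S}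

theorem eq_of_mem_of_mem (hp : IsTie p) (hA : A ∈ p.2 ∪ {p.1}) (hB : B ∈ p.2 ∪ {p.1})
    (hxA : x ∈ A) (hxB : x ∈ B) : A = B := by
  simp only [Finset.mem_union, Finset.mem_singleton] at hA hB
  rcases hA with hA | rfl <;> rcases hB with hB | rfl
  · exact (hp.2.2 x (hp.2.1 A hA x hxA)).unique ⟨hA, hxA⟩ ⟨hB, hxB⟩
  · exact absurd hxB (hp.2.1 A hA x hxA)
  · exact absurd hxA (hp.2.1 B hB x hxB)
  · rfl

theorem cell_eq (hp : IsTie p) (hA : A ∈ p.2 ∪ {p.1}) (hx : x ∈ A) : p.cell x = A := by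
  have hfilter : (p.2 ∪ {p.1}).filter (x ∈ ·) = {A} :=
    Finset.eq_singleton_iff_unique_mem.2
      ⟨Finset.mem_filter.2 ⟨hA, hx⟩, fun B hB =>
        let hB := Finset.mem_filter.1 hB
        hp.eq_of_mem_of_mem hB.1 hA hB.2 hx⟩
  rw [cell, hfilter, Finset.singleton_biUnion, id]

theorem exists_mem (hp : IsTie p) (x : S) : ∃ A ∈ p.2 ∪ {p.1}, x ∈ A := by
  by_cases hx : x ∈ p.1
  · exact ⟨p.1, Finset.mem_union_right _ (Finset.mem_singleton_self _), hx⟩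
  · obtain ⟨A, ⟨hA, hxA⟩, -⟩ := hp.2.2 x hx
    exact ⟨A, Finset.mem_union_left _ hA, hxA⟩

theorem cell_mem (hp : IsTie p) (x : S) : p.cell x ∈ p.2 ∪ {p.1} := by
  obtain ⟨A, hA, hxA⟩ := hp.exists_mem x
  rwa [hp.cell_eq hA hxA]

theorem mem_cell (hp : IsTie p) (x : S) : x ∈ p.cell x := by
  obtain ⟨A, hA, hxA⟩ := hp.exists_mem x
  rwa [hp.cell_eq hA hxA]

theorem cell_eq_cell (hp : IsTie p) (h : x ∈ p.cell y) : p.cell y = p.cell x :=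
  (hp.cell_eq (hp.cell_mem y) h).symm

theorem cell_of_mem (hp : IsTie p) (hx : x ∈ p.1) : p.cell x = p.1 :=
  hp.cell_eq (Finset.mem_union_right _ (Finset.mem_singleton_self _)) hx

theorem cell_mem_blocks (hp : IsTie p) (hx : x ∉ p.1) : p.cell x ∈ p.2 := by
  rcases Finset.mem_union.1 (hp.cell_mem x) with h | h
  · exact h
  · exact absurd (Finset.mem_singleton.1 h ▸ hp.mem_cell x) hx

theorem mem_blocks_iff (hp : IsTie p) {C : Finset S} : C ∈ p.2 ↔ ∃ x ∉ p.1, C = p.cell x := by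
  refine ⟨fun hC => ?_, fun ⟨x, hx, hC⟩ => hC ▸ hp.cell_mem_blocks hx⟩
  obtain ⟨x, hxC⟩ := hp.1 C hC
  exact ⟨x, hp.2.1 C hC x hxC, (hp.cell_eq (Finset.mem_union_left _ hC) hxC).symm⟩

theorem mem_tieComp_blocks_iff (hp : IsTie p) (hq : IsTie q) {C : Finset S} :
    C ∈ (tieComp q p).2 ↔ ∃ x ∉ p.1 ∩ q.1, C = p.cell x ∩ q.cell x := by
  simp only [_root_.tieComp, Finset.mem_filter, Finset.mem_image, Finset.mem_product,
    Prod.exists, ne_eq, Prod.mk.injEq]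
  constructor
  · rintro ⟨⟨A, B, ⟨⟨hA, hB⟩, hAB⟩, rfl⟩, x, hx⟩
    rw [Finset.mem_inter] at hx
    have hcellA := hp.cell_eq hA hx.1
    have hcellB := hq.cell_eq hB hx.2
    refine ⟨x, fun hx' => hAB ⟨?_, ?_⟩, by rw [hcellA, hcellB]⟩
    · rw [← hcellA, hp.cell_of_mem (Finset.mem_inter.1 hx').1]
    · rw [← hcellB, hq.cell_of_mem (Finset.mem_inter.1 hx').2]
  · rintro ⟨x, hx, rfl⟩
    have hxC : x ∈ p.cell x ∩ q.cell x := Finset.mem_inter.2 ⟨hp.mem_cell x, hq.mem_cell x⟩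
    refine ⟨⟨p.cell x, q.cell x, ⟨⟨hp.cell_mem x, hq.cell_mem x⟩, ?_⟩, rfl⟩, x, hxC⟩
    rintro ⟨hpx, hqx⟩
    exact hx (hpx ▸ hqx ▸ hxC)

theorem comp (hp : IsTie p) (hq : IsTie q) : IsTie (tieComp q p) := by
  have cell_eq_of_mem {x y : S} (h : x ∈ p.cell y ∩ q.cell y) :
      p.cell y ∩ q.cell y = p.cell x ∩ q.cell x := by
    rw [Finset.mem_inter] at h
    rw [hp.cell_eq_cell h.1, hq.cell_eq_cell h.2]
  refine ⟨fun C hC => (Finset.mem_filter.1 hC).2, ?_, fun x hx => ?_⟩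
  · rintro C hC x hxC (hx : x ∈ p.1 ∩ q.1)
    obtain ⟨y, hy, rfl⟩ := (hp.mem_tieComp_blocks_iff hq).1 hC
    have hyC : y ∈ p.cell y ∩ q.cell y := Finset.mem_inter.2 ⟨hp.mem_cell y, hq.mem_cell y⟩
    rw [Finset.mem_inter] at hx
    rw [cell_eq_of_mem hxC, hp.cell_of_mem hx.1, hq.cell_of_mem hx.2] at hyC
    exact hy hyC
  · have hxC : x ∈ p.cell x ∩ q.cell x := Finset.mem_inter.2 ⟨hp.mem_cell x, hq.mem_cell x⟩
    refine ⟨p.cell x ∩ q.cell x, ⟨(hp.mem_tieComp_blocks_iff hq).2 ⟨x, hx, rfl⟩, hxC⟩, ?_⟩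
    rintro C ⟨hC, hxC'⟩
    obtain ⟨y, -, rfl⟩ := (hp.mem_tieComp_blocks_iff hq).1 hC
    exact cell_eq_of_mem hxC'

theorem cell_tieComp (hp : IsTie p) (hq : IsTie q) (x : S) :
    (tieComp q p).cell x = p.cell x ∩ q.cell x := by
  have hxC : x ∈ p.cell x ∩ q.cell x := Finset.mem_inter.2 ⟨hp.mem_cell x, hq.mem_cell x⟩
  refine (hp.comp hq).cell_eq ?_ hxC
  by_cases hx : x ∈ p.1 ∩ q.1
  · rw [Finset.mem_inter] at hx
    rw [hp.cell_of_mem hx.1, hq.cell_of_mem hx.2]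
    exact Finset.mem_union_right _ (Finset.mem_singleton_self _)
  · exact Finset.mem_union_left _ ((hp.mem_tieComp_blocks_iff hq).2 ⟨x, hx, rfl⟩)

theorem ext {p' : TieData S} (hp : IsTie p) (hp' : IsTie p') (huntied : p.1 = p'.1)
    (hcell : ∀ x, p.cell x = p'.cell x) : p = p' := by
  refine Prod.ext huntied (Finset.ext fun C => ?_)
  rw [hp.mem_blocks_iff, hp'.mem_blocks_iff, huntied]
  simp only [hcell]

end IsTie

theorem isTie_univ_empty {S : Type*} [DecidableEq S] [Fintype S] :
    IsTie ((Finset.univ, ∅) : TieData S) :=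
  ⟨by simp, by simp, by simp⟩

/-- Ties on a finite set `S`, with the composition `(T₀,Q) ∘ (S₀,P)` given by the
nonempty pairwise intersections, form a monoid with identity `(S, ∅)`. -/
theorem ties_monoid (S : Type*) [Fintype S] [DecidableEq S] :
    -- closure
    (∀ p q : TieData S, IsTie p → IsTie q → IsTie (tieComp q p)) ∧
    -- associativity
    (∀ p q r : TieData S, IsTie p → IsTie q → IsTie r →
      tieComp r (tieComp q p) = tieComp (tieComp r q) p) ∧
    -- `(S, ∅)` is a two-sided identity
    (∀ p : TieData S, IsTie p →
      tieComp p (Finset.univ, ∅) = p ∧ tieComp (Finset.univ, ∅) p = p) ∧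
    IsTie ((Finset.univ, ∅) : TieData S) := by
  have cell_univ_empty (x : S) : TieData.cell ((Finset.univ, ∅) : TieData S) x = Finset.univ :=
    isTie_univ_empty.cell_of_mem (Finset.mem_univ x)
  refine ⟨fun p q hp hq => hp.comp hq, fun p q r hp hq hr => ?_,
    fun p hp => ⟨?_, ?_⟩, isTie_univ_empty⟩
  · refine ((hp.comp hq).comp hr).ext (hp.comp (hq.comp hr)) (Finset.inter_assoc _ _ _)
      fun x => ?_
    rw [(hp.comp hq).cell_tieComp hr, hp.cell_tieComp hq, hp.cell_tieComp (hq.comp hr),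
      hq.cell_tieComp hr, Finset.inter_assoc]
  · refine (isTie_univ_empty.comp hp).ext hp (Finset.univ_inter _) fun x => ?_
    rw [isTie_univ_empty.cell_tieComp hp, cell_univ_empty, Finset.univ_inter]
  · refine (hp.comp isTie_univ_empty).ext hp (Finset.inter_univ _) fun x => ?_
    rw [hp.cell_tieComp isTie_univ_empty, cell_univ_empty, Finset.inter_univ]
end

section
/- For a groupoid G and a G-bimodule monoid ρ in Set, the data of a pointing (an assignment of elements u(id_X) ∈ ρ(X,X) for each object X, acting as two-sided units for the monoid multiplication) extends uniquely to a unit, i.e. a natural transformation u : Hom_G → ρ of G-bimodules which is a strict two-sided unit; in particular u(σ) := (id ⇓ σ)(u(id_{s(σ)})) is equivariant: (σ ⇓ σ')(u(τ)) = u(σ'∘τ∘σ⁻¹). -/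
open CategoryTheory

universe w v u

/-- For a groupoid `G` and a `G`-bimodule monoid `ρ` in `Set` (a bimodule with an
associative, equivariant and balanced multiplication `γ`), the data of a pointing
(elements `i X ∈ ρ(X, X)` acting as two-sided units for `γ`) extends uniquely to a
unit: a natural transformation `u : Hom_G → ρ` of `G`-bimodules restricting to the
pointing on identities, equivariant (`(σ ⇓ σ')(u τ) = u (σ' ∘ τ ∘ σ⁻¹)`), and acting
as a strict two-sided unit for `γ`. -/
theorem pointing_extends_uniquely_to_unit
    {G : Type u} [Groupoid.{v} G]
    (ρ : G → G → Type w)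
    (act : ∀ {X X' Y Y' : G}, (X ⟶ X') → (Y ⟶ Y') → ρ X Y → ρ X' Y')
    (act_id : ∀ {X Y : G} (p : ρ X Y), act (𝟙 X) (𝟙 Y) p = p)
    (act_comp : ∀ {X X' X'' Y Y' Y'' : G} (σ₁ : X ⟶ X') (σ₂ : X' ⟶ X'')
      (τ₁ : Y ⟶ Y') (τ₂ : Y' ⟶ Y'') (p : ρ X Y),
      act (σ₁ ≫ σ₂) (τ₁ ≫ τ₂) p = act σ₂ τ₂ (act σ₁ τ₁ p))
    (γ : ∀ {X Y Z : G}, ρ Y Z → ρ X Y → ρ X Z)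
    (γ_assoc : ∀ {W X Y Z : G} (p : ρ Y Z) (q : ρ X Y) (r : ρ W X),
      γ (γ p q) r = γ p (γ q r))
    (γ_equivariant : ∀ {X X' Y Y' Z Z' : G} (σ : X ⟶ X') (τ : Y ⟶ Y') (υ : Z ⟶ Z')
      (p : ρ Y Z) (q : ρ X Y),
      γ (act τ υ p) (act σ τ q) = act σ υ (γ p q))
    (γ_balanced : ∀ {X Y Y' Z : G} (σ : Y' ⟶ Y) (p : ρ Y Z) (q : ρ X Y'),
      γ (act (Groupoid.inv σ) (𝟙 Z) p) q = γ p (act (𝟙 X) σ q))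
    (i : ∀ X : G, ρ X X)
    (i_left : ∀ {X Y : G} (p : ρ X Y), γ (i Y) p = p)
    (i_right : ∀ {X Y : G} (p : ρ X Y), γ p (i X) = p) :
    ∃! u : ∀ X Y : G, (X ⟶ Y) → ρ X Y,
      -- `u` restricts to the pointing
      (∀ X : G, u X X (𝟙 X) = i X) ∧
      -- `u` is equivariant, i.e. a morphism of `G`-bimodules
      (∀ (X X' Y Y' : G) (σ : X ⟶ X') (σ' : Y ⟶ Y') (τ : X ⟶ Y),
        act σ σ' (u X Y τ) = u X' Y' (Groupoid.inv σ ≫ τ ≫ σ')) ∧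
      -- `u` is a strict two-sided unit for the plethysm multiplication
      (∀ (X Y Z : G) (σ : Y ⟶ Z) (p : ρ X Y),
        γ (u Y Z σ) p = act (𝟙 X) σ p) ∧
      (∀ (X Y Z : G) (σ : X ⟶ Y) (p : ρ Y Z),
        γ p (u X Y σ) = act (Groupoid.inv σ) (𝟙 Z) p) := by
  -- i is equivariant: act σ σ (i X) = i X'
  have i_equiv : ∀ {X X' : G} (σ : X ⟶ X'), act σ σ (i X) = i X' := by
    intro X X' σ
    -- act σ σ (i X) is a left unit at X'
    have hleft : ∀ {W : G} (p : ρ W X'), γ (act σ σ (i X)) p = p := by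
      intro W p
      have h := γ_equivariant (𝟙 W) σ σ (i X) (act (𝟙 W) (Groupoid.inv σ) p)
      rw [i_left] at h
      rw [← act_comp] at h
      simpa [act_id] using h
    calc act σ σ (i X) = γ (act σ σ (i X)) (i X') := (i_right _).symm
      _ = i X' := hleft _
  refine ⟨fun X Y τ => act (𝟙 X) τ (i X), ⟨fun X => act_id _, ?_, ?_, ?_⟩, ?_⟩
  · intro X X' Y Y' σ σ' τ
    dsimp only
    rw [← i_equiv σ, ← act_comp, ← act_comp]
    simp
  · intro X Y Z σ p
    have h := γ_equivariant (𝟙 X) (𝟙 Y) σ (i Y) p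
    rw [i_left, act_id] at h
    exact h
  · intro X Y Z σ p
    have h := γ_balanced σ p (i X)
    rw [i_right] at h
    exact h.symm
  · rintro u' ⟨h1, h2, -, -⟩
    funext X Y τ
    have h := h2 X X X Y (𝟙 X) τ (𝟙 X)
    rw [h1] at h
    simpa using h.symm
end

section
/- Let C be a monoidal category generated by wide monoidal subcategories spure(C) and I(C), and suppose C is (spure, I)-crossed: for every composable pair Σ ∈ I(C), Γ ∈ spure(C) with Σ∘Γ defined, there exist Σ' ∈ I(C) and Γ' ∈ spure(C) with Σ∘Γ = Γ'∘Σ'. Then every morphism of C can be written in the form Γ∘Σ with Γ ∈ spure(C) and Σ ∈ I(C). -/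
open CategoryTheory MonoidalCategory

universe v u

variable {C : Type u} [Category.{v} C] [MonoidalCategory C]

/-- The class of morphisms generated by a class `P` under identities, composition and
the monoidal product. -/
inductive GenBy (P : MorphismProperty C) : ∀ {X Y : C}, (X ⟶ Y) → Prop
  | of {X Y : C} {f : X ⟶ Y} : P f → GenBy P f
  | id (X : C) : GenBy P (𝟙 X)
  | comp {X Y Z : C} {f : X ⟶ Y} {g : Y ⟶ Z} : GenBy P f → GenBy P g → GenBy P (f ≫ g)
  | tensor {X X' Y Y' : C} {f : X ⟶ Y} {g : X' ⟶ Y'} :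
      GenBy P f → GenBy P g → GenBy P (f ⊗ₘ g)

/-!
Factorizations `σ ≫ γ` with `σ ∈ I` and `γ ∈ S` contain `I` and `S` and are closed under the
monoidal product, since `(σ₁ ≫ γ₁) ⊗ (σ₂ ≫ γ₂) = (σ₁ ⊗ σ₂) ≫ (γ₁ ⊗ γ₂)`. They are also closed
under composition: in `σ₁ ≫ γ₁ ≫ σ₂ ≫ γ₂` the crossing condition rewrites the middle `γ₁ ≫ σ₂`
as some `σ' ≫ γ'`. Hence they contain everything generated by `I ∪ S`.
-/

theorem GenBy.mem {P Q : MorphismProperty C} [Q.IsMonoidal] (hPQ : P ≤ Q) {X Y : C}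
    {f : X ⟶ Y} (hf : GenBy P f) : Q f := by
  induction hf with
  | of hf => exact hPQ _ hf
  | id X => exact Q.id_mem X
  | comp _ _ hf hg => exact Q.comp_mem _ _ hf hg
  | tensor _ _ hf hg => exact Q.tensorHom_mem _ _ hf hg

namespace CategoryTheory.MorphismProperty

variable {D : Type*} [Category D] {W₁ W₂ : MorphismProperty D}

theorem sup_le_comp [W₁.ContainsIdentities] [W₂.ContainsIdentities] : W₁ ⊔ W₂ ≤ W₁.comp W₂ := by
  rintro X Y f (hf | hf)
  · exact ⟨{ Z := Y, i := f, p := 𝟙 Y, hi := hf, hp := W₂.id_mem Y }⟩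
  · exact ⟨{ Z := X, i := 𝟙 X, p := f, hi := W₁.id_mem X, hp := hf }⟩

theorem isMultiplicative_comp [W₁.IsMultiplicative] [W₂.IsMultiplicative]
    (hcross : W₂.comp W₁ ≤ W₁.comp W₂) : (W₁.comp W₂).IsMultiplicative where
  id_mem X := sup_le_comp _ (Or.inl (W₁.id_mem X))
  comp_mem f g := by
    rintro ⟨hf⟩ ⟨hg⟩
    obtain ⟨h⟩ := hcross (hf.p ≫ hg.i) ⟨{ Z := _, i := hf.p, p := hg.i, hi := hf.hp, hp := hg.hi }⟩
    exact ⟨{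
      Z := h.Z
      i := hf.i ≫ h.i
      p := h.p ≫ hg.p
      hi := W₁.comp_mem _ _ hf.hi h.hi
      hp := W₂.comp_mem _ _ h.hp hg.hp }⟩

theorem isMonoidal_comp {W₁ W₂ : MorphismProperty C} [W₁.IsMonoidal] [W₂.IsMonoidal]
    (hcross : W₂.comp W₁ ≤ W₁.comp W₂) : (W₁.comp W₂).IsMonoidal :=
  have := isMultiplicative_comp hcross
  .mk' _ fun f g ⟨hf⟩ ⟨hg⟩ => ⟨{
    Z := _
    i := hf.i ⊗ₘ hg.i
    p := hf.p ⊗ₘ hg.p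
    fac := by rw [tensorHom_comp_tensorHom, hf.fac, hg.fac]
    hi := W₁.tensorHom_mem _ _ hf.hi hg.hi
    hp := W₂.tensorHom_mem _ _ hf.hp hg.hp }⟩

end CategoryTheory.MorphismProperty

/-- Let `C` be a monoidal category generated by wide monoidal subcategories
`spure(C) = S` and `I(C) = I`, and suppose `C` is `(spure, I)`-crossed: every
composable pair `Σ ∘ Γ` with `Γ ∈ S` and `Σ ∈ I` can be rewritten as `Γ' ∘ Σ'` with
`Σ' ∈ I` and `Γ' ∈ S`. Then every morphism of `C` can be written in the form
`Γ ∘ Σ` with `Γ ∈ spure(C)` and `Σ ∈ I(C)`. -/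
theorem crossed_factorization (I S : MorphismProperty C)
    (hIid : ∀ X : C, I (𝟙 X)) (hSid : ∀ X : C, S (𝟙 X))
    (hIcomp : ∀ {X Y Z : C} (f : X ⟶ Y) (g : Y ⟶ Z), I f → I g → I (f ≫ g))
    (hScomp : ∀ {X Y Z : C} (f : X ⟶ Y) (g : Y ⟶ Z), S f → S g → S (f ≫ g))
    (hItensor : ∀ {X X' Y Y' : C} (f : X ⟶ Y) (g : X' ⟶ Y'), I f → I g → I (f ⊗ₘ g))
    (hStensor : ∀ {X X' Y Y' : C} (f : X ⟶ Y) (g : X' ⟶ Y'), S f → S g → S (f ⊗ₘ g))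
    (hgen : ∀ {X Y : C} (f : X ⟶ Y), GenBy (I ⊔ S) f)
    (hcrossed : ∀ {X Y Z : C} (γ : X ⟶ Y) (σ : Y ⟶ Z), S γ → I σ →
      ∃ (W : C) (σ' : X ⟶ W) (γ' : W ⟶ Z), I σ' ∧ S γ' ∧ γ ≫ σ = σ' ≫ γ') :
    ∀ {X Y : C} (f : X ⟶ Y),
      ∃ (Z : C) (σ : X ⟶ Z) (γ : Z ⟶ Y), I σ ∧ S γ ∧ f = σ ≫ γ := by
  have : I.IsMultiplicative := { id_mem := hIid, comp_mem := hIcomp }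
  have : S.IsMultiplicative := { id_mem := hSid, comp_mem := hScomp }
  have : I.IsMonoidal := .mk' I hItensor
  have : S.IsMonoidal := .mk' S hStensor
  have hcross : S.comp I ≤ I.comp S := by
    rintro X Z _ ⟨h⟩
    obtain ⟨W, σ', γ', hσ', hγ', hswap⟩ := hcrossed h.i h.p h.hi h.hp
    exact ⟨{ Z := W, i := σ', p := γ', fac := hswap ▸ h.fac, hi := hσ', hp := hγ' }⟩
  have := MorphismProperty.isMonoidal_comp hcross
  intro X Y f
  obtain ⟨h⟩ := (hgen f).mem MorphismProperty.sup_le_comp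
  exact ⟨h.Z, h.i, h.p, h.hi, h.hp, h.fac.symm⟩
end
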